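/- There is an absolute constant C > 0 such that for every real matrix A ∈ ℝ^{m×n} with m, n ≥ 2 and every partial coloring x ∈ (−1,1)^n, there exists x' ∈ [−1,1]^n such that: (i) at least n/2 coordinates i ∈ [n] satisfy |x'_i| = 1, and (ii) for every row a_jᵀ of A, |⟨a_j, x'⟩ − ⟨a_j, x⟩| ≤ C · herdisc(A) · (log m)^{3/2}. -/

import Mathlib

open Matrix

/-- The discrepancy of a real matrix `A` with respect to colorings `x ∈ {-1,1}^n`. -/
noncomputable def disc {m n : Type*} [Fintype m] [Fintype n] (A : Matrix m n ℝ) : ℝ :=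
  sInf {d : ℝ | ∃ x : n → ℝ, (∀ i, x i = 1 ∨ x i = -1) ∧ d = ‖A.mulVec x‖}

/-- The hereditary discrepancy of `A`: the maximum of `disc B` over all matrices `B`
obtained from `A` by deleting a subset of the columns. -/
noncomputable def herdisc {m n : Type*} [Fintype m] [Fintype n] (A : Matrix m n ℝ) : ℝ :=
  sSup {d : ℝ | ∃ S : Finset n, d = disc (A.submatrix id (fun j : S => (j : n)))}

/-!
Hereditary discrepancy controls linear discrepancy (Lovász–Spencer–Vesztergombi). Truncate `x`
to `k = n` binary digits, which moves every row by at most `n 2⁻ⁿ max |A j i| ≤ herdisc A`. Then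
remove the last binary digit repeatedly: the coordinates whose numerator is odd form a set of
columns, and adding `2⁻ᵏ` times a low-discrepancy `±1` coloring of them makes every numerator even,
at a cost of `2⁻ᵏ herdisc A`. Once the numerators lie in `{-1, 0, 1}`, one more coloring of the zero
coordinates yields a full coloring. The total error `3 herdisc A` is below
`C herdisc A (log m)^{3/2}` as soon as `m ≥ 2`.
-/

section

variable {m n : Type*} [Fintype m] [Fintype n]

theorem exists_sign_vector_norm_mulVec_eq_disc (A : Matrix m n ℝ) :
    ∃ x : n → ℝ, (∀ i, x i = 1 ∨ x i = -1) ∧ ‖A *ᵥ x‖ = disc A := by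
  set D := {d : ℝ | ∃ x : n → ℝ, (∀ i, x i = 1 ∨ x i = -1) ∧ d = ‖A *ᵥ x‖}
  have hfin : D.Finite := by
    refine ((Set.Finite.pi fun _ => Set.toFinite ({1, -1} : Set ℝ)).image
      fun x => ‖A *ᵥ x‖).subset ?_
    rintro d ⟨x, hx, rfl⟩
    exact ⟨x, fun i _ => hx i, rfl⟩
  obtain ⟨x, hx, hd⟩ := Set.Nonempty.csInf_mem (s := D) ⟨_, 1, fun _ => Or.inl rfl, rfl⟩ hfin
  exact ⟨x, hx, hd.symm⟩

theorem disc_nonneg (A : Matrix m n ℝ) : 0 ≤ disc A := by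
  obtain ⟨x, -, hx⟩ := exists_sign_vector_norm_mulVec_eq_disc A
  exact hx ▸ norm_nonneg _

theorem disc_submatrix_le_herdisc (A : Matrix m n ℝ) (S : Finset n) :
    disc (A.submatrix id (fun j : S => (j : n))) ≤ herdisc A := by
  refine le_csSup ((Set.finite_range fun T : Finset n =>
    disc (A.submatrix id fun j : T => (j : n))).subset ?_).bddAbove ⟨S, rfl⟩
  rintro d ⟨T, rfl⟩
  exact ⟨T, rfl⟩

theorem herdisc_nonneg (A : Matrix m n ℝ) : 0 ≤ herdisc A :=
  (disc_nonneg _).trans (disc_submatrix_le_herdisc A ∅)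

theorem exists_partial_coloring_norm_mulVec_le_herdisc (A : Matrix m n ℝ) (S : Finset n) :
    ∃ ε : n → ℝ, (∀ i ∈ S, ε i = 1 ∨ ε i = -1) ∧ (∀ i ∉ S, ε i = 0) ∧
      ‖A *ᵥ ε‖ ≤ herdisc A := by
  classical
  obtain ⟨x, hx, hdisc⟩ :=
    exists_sign_vector_norm_mulVec_eq_disc (A.submatrix id fun j : S => (j : n))
  refine ⟨fun i => if h : i ∈ S then x ⟨i, h⟩ else 0, fun i hi => by simpa [hi] using hx ⟨i, hi⟩,
    fun i hi => by simp [hi], ?_⟩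
  have hext : A *ᵥ (fun i => if h : i ∈ S then x ⟨i, h⟩ else 0) =
      (A.submatrix id fun j : S => (j : n)) *ᵥ x := by
    ext j
    simp only [mulVec, dotProduct, submatrix_apply, id]
    rw [← Finset.sum_subset S.subset_univ fun i _ hi => by simp [hi], ← Finset.sum_coe_sort S]
    exact Finset.sum_congr rfl fun i _ => by simp [i.2]
  rw [hext, hdisc]
  exact disc_submatrix_le_herdisc A S

theorem abs_apply_le_herdisc (A : Matrix m n ℝ) (j : m) (i : n) : |A j i| ≤ herdisc A := by
  classical
  obtain ⟨ε, hε, hε0, hA⟩ := exists_partial_coloring_norm_mulVec_le_herdisc A {i}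
  have hcol : (A *ᵥ ε) j = A j i * ε i :=
    Finset.sum_eq_single i (fun k _ hk => by rw [hε0 k (by simpa using hk), mul_zero])
      (by simp)
  have hεi : |ε i| = 1 := by rcases hε i (by simp) with h | h <;> simp [h]
  calc |A j i| = |(A *ᵥ ε) j| := by rw [hcol, abs_mul, hεi, mul_one]
    _ ≤ ‖A *ᵥ ε‖ := norm_le_pi_norm (A *ᵥ ε) j
    _ ≤ herdisc A := hA

theorem norm_mulVec_le_card_mul_herdisc (A : Matrix m n ℝ) {v : n → ℝ} {δ : ℝ}
    (hδ : 0 ≤ δ) (hv : ∀ i, |v i| ≤ δ) : ‖A *ᵥ v‖ ≤ Fintype.card n * δ * herdisc A := by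
  refine (pi_norm_le_iff_of_nonneg (by have := herdisc_nonneg A; positivity)).2 fun j => ?_
  calc ‖(A *ᵥ v) j‖ ≤ ∑ i, |A j i * v i| := Finset.abs_sum_le_sum_abs _ _
    _ ≤ ∑ _i : n, herdisc A * δ := Finset.sum_le_sum fun i _ => by
        rw [abs_mul]
        exact mul_le_mul (abs_apply_le_herdisc A j i) (hv i) (abs_nonneg _) (herdisc_nonneg A)
    _ = Fintype.card n * δ * herdisc A := by rw [Finset.sum_const, Finset.card_univ]; ring

theorem exists_int_abs_le_two_pow_abs_sub_div_le {x : ℝ} (hx : |x| ≤ 1) (k : ℕ) :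
    ∃ z : ℤ, |z| ≤ 2 ^ k ∧ |x - z / 2 ^ k| ≤ (1 / 2) ^ k := by
  have hpow : (0 : ℝ) < 2 ^ k := by positivity
  obtain ⟨hx₁, hx₂⟩ := abs_le.1 hx
  refine ⟨⌊x * 2 ^ k⌋, abs_le.2 ⟨Int.le_floor.2 ?_, ?_⟩, ?_⟩
  · push_cast; nlinarith
  · have : (⌊x * 2 ^ k⌋ : ℝ) ≤ 2 ^ k := (Int.floor_le _).trans (by nlinarith)
    exact_mod_cast this
  · have hsub : x - ⌊x * 2 ^ k⌋ / 2 ^ k = (x * 2 ^ k - ⌊x * 2 ^ k⌋) * (1 / 2) ^ k := by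
      rw [_root_.one_div_pow]; field_simp
    rw [hsub, abs_mul, abs_of_pos (by positivity : (0 : ℝ) < (1 / 2) ^ k)]
    refine mul_le_of_le_one_left (by positivity) (abs_le.2 ⟨?_, ?_⟩) <;>
      linarith [Int.floor_le (x * 2 ^ k), Int.lt_floor_add_one (x * 2 ^ k)]

theorem exists_abs_le_two_pow_div_eq_add_div_two_pow_succ {z : ℤ} {e : ℝ} {k : ℕ}
    (hz : |z| ≤ 2 ^ (k + 1)) (hodd : Odd z → e = 1 ∨ e = -1) (heven : ¬Odd z → e = 0) :
    ∃ w : ℤ, |w| ≤ 2 ^ k ∧ (w : ℝ) / 2 ^ k = (z + e) / 2 ^ (k + 1) := by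
  obtain ⟨hz₁, hz₂⟩ := abs_le.1 hz
  rw [pow_succ] at hz₁ hz₂
  have hk : (1 : ℤ) ≤ 2 ^ k := one_le_pow₀ (by norm_num)
  have hdiv : ∀ w : ℤ, (w : ℝ) / 2 ^ k = 2 * w / 2 ^ (k + 1) := fun w => by
    rw [pow_succ]; field_simp
  rcases Int.even_or_odd z with ⟨t, rfl⟩ | ⟨t, rfl⟩
  · refine ⟨t, abs_le.2 ⟨by omega, by omega⟩, ?_⟩
    rw [heven (Int.not_odd_iff_even.2 ⟨t, rfl⟩), hdiv]
    push_cast; ring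
  · rcases hodd ⟨t, rfl⟩ with rfl | rfl
    · refine ⟨t + 1, abs_le.2 ⟨by omega, by omega⟩, ?_⟩
      rw [hdiv]; push_cast; ring
    · refine ⟨t, abs_le.2 ⟨by omega, by omega⟩, ?_⟩
      rw [hdiv]; push_cast; ring

theorem exists_sign_vector_norm_mulVec_sub_dyadic_le (A : Matrix m n ℝ) (k : ℕ) (z : n → ℤ)
    (hz : ∀ i, |z i| ≤ 2 ^ k) :
    ∃ x : n → ℝ, (∀ i, x i = 1 ∨ x i = -1) ∧
      ‖A *ᵥ (x - fun i => (z i : ℝ) / 2 ^ k)‖ ≤ (2 - (1 / 2) ^ k) * herdisc A := by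
  classical
  induction k generalizing z with
  | zero =>
    obtain ⟨ε, hε, hε0, hA⟩ :=
      exists_partial_coloring_norm_mulVec_le_herdisc A (Finset.univ.filter fun i => z i = 0)
    refine ⟨fun i => z i + ε i, fun i => ?_, ?_⟩
    · by_cases hzi : z i = 0
      · simpa [hzi] using hε i (by simp [hzi])
      · have : z i = 1 ∨ z i = -1 := by
          have := abs_le.1 (hz i)
          rw [pow_zero] at this
          omega
        rcases this with h | h <;> simp [h, hε0 i (by simp [hzi])]
    · have hdiff : ((fun i => (z i : ℝ) + ε i) - fun i => (z i : ℝ) / 2 ^ 0) = ε := by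
        ext i; simp
      rw [hdiff]
      norm_num [hA]
  | succ k ih =>
    obtain ⟨ε, hε, hε0, hA⟩ :=
      exists_partial_coloring_norm_mulVec_le_herdisc A (Finset.univ.filter fun i => Odd (z i))
    choose w hw hwz using fun i => exists_abs_le_two_pow_div_eq_add_div_two_pow_succ (hz i)
      (fun h => hε i (by simpa using h)) (fun h => hε0 i (by simpa using h))
    obtain ⟨x, hx, hxw⟩ := ih w hw
    refine ⟨x, hx, ?_⟩
    have hsplit : (x - fun i => (z i : ℝ) / 2 ^ (k + 1)) =
        (x - fun i => (w i : ℝ) / 2 ^ k) + (1 / 2 : ℝ) ^ (k + 1) • ε := by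
      ext i
      simp only [Pi.add_apply, Pi.sub_apply, Pi.smul_apply, smul_eq_mul, hwz, div_pow, one_pow]
      field_simp
      ring
    calc ‖A *ᵥ (x - fun i => (z i : ℝ) / 2 ^ (k + 1))‖
        ≤ ‖A *ᵥ (x - fun i => (w i : ℝ) / 2 ^ k)‖ + (1 / 2) ^ (k + 1) * ‖A *ᵥ ε‖ := by
          rw [hsplit, mulVec_add, mulVec_smul]
          refine (norm_add_le _ _).trans_eq ?_
          rw [norm_smul, Real.norm_of_nonneg (by positivity)]
      _ ≤ (2 - (1 / 2) ^ k) * herdisc A + (1 / 2) ^ (k + 1) * herdisc A := by gcongr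
      _ = (2 - (1 / 2) ^ (k + 1)) * herdisc A := by ring

theorem exists_sign_vector_norm_mulVec_sub_le_three_mul_herdisc (A : Matrix m n ℝ)
    {x : n → ℝ} (hx : ∀ i, |x i| ≤ 1) :
    ∃ x' : n → ℝ, (∀ i, x' i = 1 ∨ x' i = -1) ∧ ‖A *ᵥ (x' - x)‖ ≤ 3 * herdisc A := by
  set k := Fintype.card n
  choose z hz hzx using fun i => exists_int_abs_le_two_pow_abs_sub_div_le (hx i) k
  set y : n → ℝ := fun i => (z i : ℝ) / 2 ^ k
  obtain ⟨x', hx', hround⟩ := exists_sign_vector_norm_mulVec_sub_dyadic_le A k z hz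
  have hk : (k : ℝ) * (1 / 2) ^ k ≤ 1 := by
    rw [div_pow, one_pow, mul_one_div, div_le_one (by positivity)]
    exact_mod_cast k.lt_two_pow_self.le
  have htrunc : ‖A *ᵥ (y - x)‖ ≤ herdisc A :=
    calc ‖A *ᵥ (y - x)‖ ≤ k * (1 / 2) ^ k * herdisc A :=
          norm_mulVec_le_card_mul_herdisc A (by positivity) fun i => by
            rw [Pi.sub_apply, abs_sub_comm]; exact hzx i
      _ ≤ herdisc A := mul_le_of_le_one_left (herdisc_nonneg A) hk
  refine ⟨x', hx', ?_⟩
  calc ‖A *ᵥ (x' - x)‖ = ‖A *ᵥ (x' - y) + A *ᵥ (y - x)‖ := by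
        rw [← mulVec_add, sub_add_sub_cancel]
    _ ≤ ‖A *ᵥ (x' - y)‖ + ‖A *ᵥ (y - x)‖ := norm_add_le _ _
    _ ≤ (2 - (1 / 2) ^ k) * herdisc A + herdisc A := add_le_add hround htrunc
    _ ≤ 3 * herdisc A := by
        nlinarith [herdisc_nonneg A, pow_nonneg (by norm_num : (0 : ℝ) ≤ 1 / 2) k]

end

theorem stmt2 :
    ∃ C : ℝ, 0 < C ∧
      ∀ (m n : ℕ) (A : Matrix (Fin m) (Fin n) ℝ), 2 ≤ m → 2 ≤ n →
        ∀ x : Fin n → ℝ, (∀ i, |x i| < 1) →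
          ∃ x' : Fin n → ℝ, (∀ i, |x' i| ≤ 1) ∧
            n ≤ 2 * Set.ncard {i : Fin n | |x' i| = 1} ∧
            ∀ j : Fin m, |(∑ i, A j i * x' i) - ∑ i, A j i * x i| ≤
              C * herdisc A * Real.log m ^ ((3 : ℝ) / 2) := by
  have hlog2 : 0 < Real.log 2 ^ ((3 : ℝ) / 2) := Real.rpow_pos_of_pos (Real.log_pos one_lt_two) _
  refine ⟨3 / Real.log 2 ^ ((3 : ℝ) / 2), by positivity, fun m n A hm _ x hx => ?_⟩
  obtain ⟨x', hx', hA⟩ :=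
    exists_sign_vector_norm_mulVec_sub_le_three_mul_herdisc A fun i => (hx i).le
  have habs : ∀ i, |x' i| = 1 := fun i => by rcases hx' i with h | h <;> simp [h]
  refine ⟨x', fun i => (habs i).le, ?_, fun j => ?_⟩
  · have hall : {i : Fin n | |x' i| = 1} = Set.univ := Set.eq_univ_of_forall habs
    rw [hall, Set.ncard_univ, Nat.card_fin]
    omega
  have hlogm : Real.log 2 ^ ((3 : ℝ) / 2) ≤ Real.log m ^ ((3 : ℝ) / 2) :=
    Real.rpow_le_rpow (Real.log_nonneg one_le_two)
      (Real.log_le_log two_pos (by exact_mod_cast hm)) (by norm_num)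
  calc |(∑ i, A j i * x' i) - ∑ i, A j i * x i| = |(A *ᵥ (x' - x)) j| := by
        rw [mulVec_sub]; rfl
    _ ≤ 3 * herdisc A := (norm_le_pi_norm _ j).trans hA
    _ = 3 / Real.log 2 ^ ((3 : ℝ) / 2) * herdisc A * Real.log 2 ^ ((3 : ℝ) / 2) := by
        field_simp
    _ ≤ 3 / Real.log 2 ^ ((3 : ℝ) / 2) * herdisc A * Real.log m ^ ((3 : ℝ) / 2) := by
        have hH := herdisc_nonneg A
        gcongr
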